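/- For every k and every n ≥ k² + k, there is no decision tree over assignment queries of depth k−1 computing One^k_n; hence rk(One^k_n) = k for such n. -/

import Mathlib

/-- Decision trees over assignment queries: each internal node is labeled by a
linear ordering of the set `A` of assignments (represented by an injection
`A ↪ ℕ` giving each assignment its position in the ordering), with one child per
possible answer; leaves are labeled by outputs. -/
inductive DTree (A O : Type) where
  | leaf (o : O)
  | node (τ : A ↪ ℕ) (child : A → DTree A O)

/-- The τ-first element of the set `C` of assignments consistent with the input. -/
noncomputable def firstConsistent {A : Type} [Nonempty A] (τ : A ↪ ℕ) (C : Finset A) : A :=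
  Function.invFun τ ((C.image τ).min.getD 0)

/-- Depth of a decision tree: maximal number of queries on a root-to-leaf path. -/
def DTree.depth {A O : Type} [Fintype A] : DTree A O → ℕ
  | .leaf _ => 0
  | .node _ c => (Finset.univ.sup fun a => (c a).depth) + 1

/-- Evaluation of a decision tree on an input `w`, where `consSet w` is the set of
assignments consistent with `w`: at each node descend along the child labeled by
the first consistent assignment in the node's ordering. -/
noncomputable def DTree.eval {I A O : Type} [Nonempty A] (consSet : I → Finset A) :
    DTree A O → I → O
  | .leaf o, _ => o
  | .node τ c, w => (c (firstConsistent τ (consSet w))).eval consSet w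

/-- One^k_n(w) : the (1-based) position of the k-th one in w ∈ {0,1}^n, or n+1
if w has fewer than k ones. -/
def oneK (k n : ℕ) (w : Fin n → Bool) : ℕ :=
  (((Finset.range n).filter fun p =>
      (Finset.univ.filter fun j : Fin n => (j : ℕ) ≤ p ∧ w j = true).card = k).min.getD n) + 1

/-- Assignments are pairs (i,b) with i ∈ [n], b ∈ {0,1}; (i,b) is consistent
with w iff w_i = b. -/
def consSetB (n : ℕ) (w : Fin n → Bool) : Finset (Fin n × Bool) :=
  Finset.univ.filter fun a => w a.1 = a.2

/-! The adversary walks down the tree answering each query with the first assignment that is still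
compatible with its earlier answers; all inputs consistent with these (at most depth many) answers
reach the same leaf. Fixing at most `k - 1` of `n ≥ 2k - 1` positions leaves room for both an input
with fewer than `k` ones and one with exactly `k` ones, and `One^k_n` differs on them. -/

lemma firstConsistent_eq_of_forall_le {A : Type} [Nonempty A] (τ : A ↪ ℕ) {C : Finset A}
    {a : A} (ha : a ∈ C) (hmin : ∀ b ∈ C, τ a ≤ τ b) : firstConsistent τ C = a := by
  have hmin' : (C.image τ).min = τ a :=
    le_antisymm (Finset.min_le (Finset.mem_image_of_mem τ ha))
      (Finset.le_min_iff.2 fun _ hm => by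
        obtain ⟨b, hb, rfl⟩ := Finset.mem_image.1 hm
        exact WithTop.coe_le_coe.2 (hmin b hb))
  rw [firstConsistent, hmin']
  exact Function.leftInverse_invFun τ.injective a

namespace DTree

variable {I A O : Type}

lemma depth_child_lt [Fintype A] (τ : A ↪ ℕ) (c : A → DTree A O) (a : A) :
    (c a).depth < (node τ c).depth :=
  Nat.lt_succ_of_le (Finset.le_sup (f := fun a => (c a).depth) (Finset.mem_univ a))

theorem exists_superset_eval_const [Fintype A] [Nonempty A] (consSet : I → Finset A)
    (hcons : ∀ w, (consSet w).Nonempty) (T : DTree A O) (Q : Finset A) (w₀ : I)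
    (hQ : Q ⊆ consSet w₀) :
    ∃ Q' ⊇ Q, (∃ w', Q' ⊆ consSet w') ∧ Q'.card ≤ Q.card + T.depth ∧
      ∃ o, ∀ w, Q' ⊆ consSet w → T.eval consSet w = o := by
  classical
  induction T generalizing Q w₀ with
  | leaf o => exact ⟨Q, subset_rfl, ⟨w₀, hQ⟩, Nat.le_add_right _ _, o, fun _ _ => rfl⟩
  | node τ c ih =>
    set compatible := Finset.univ.filter fun a => ∃ w, insert a Q ⊆ consSet w
    have hne : compatible.Nonempty := by
      obtain ⟨a, ha⟩ := hcons w₀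
      exact ⟨a, Finset.mem_filter.2 ⟨Finset.mem_univ a, w₀, Finset.insert_subset ha hQ⟩⟩
    obtain ⟨a₀, ha₀, hmin⟩ := compatible.exists_min_image τ hne
    obtain ⟨w₁, hw₁⟩ := (Finset.mem_filter.1 ha₀).2
    obtain ⟨Q', hsub, hQ', hcard, o, ho⟩ := ih a₀ (insert a₀ Q) w₁ hw₁
    refine ⟨Q', (Finset.subset_insert a₀ Q).trans hsub, hQ', ?_, o, fun w hw => ?_⟩
    · have := Finset.card_insert_le a₀ Q
      have := depth_child_lt τ c a₀
      omega
    · -- every assignment consistent with `w` is compatible with `Q`, witnessed by `w` itself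
      obtain ⟨ha₀w, hQw⟩ := Finset.insert_subset_iff.1 (hsub.trans hw)
      have hfirst : firstConsistent τ (consSet w) = a₀ :=
        firstConsistent_eq_of_forall_le τ ha₀w fun b hb =>
          hmin b (Finset.mem_filter.2 ⟨Finset.mem_univ b, w, Finset.insert_subset hb hQw⟩)
      rw [eval, hfirst]
      exact ho w hw

end DTree

section OneK

variable {k n : ℕ} {w : Fin n → Bool}

lemma oneK_of_card_lt (h : (Finset.univ.filter fun j => w j = true).card < k) :
    oneK k n w = n + 1 := by
  have hempty : ((Finset.range n).filter fun p =>
      (Finset.univ.filter fun j : Fin n => (j : ℕ) ≤ p ∧ w j = true).card = k) = ∅ := by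
    refine Finset.filter_eq_empty_iff.2 fun p _ hp => ?_
    have hsub : (Finset.univ.filter fun j : Fin n => (j : ℕ) ≤ p ∧ w j = true) ⊆
        Finset.univ.filter fun j => w j = true :=
      Finset.monotone_filter_right _ fun _ _ hj => hj.2
    exact h.not_ge (hp ▸ Finset.card_le_card hsub)
  rw [oneK, hempty]
  rfl

lemma oneK_le_of_card_eq [NeZero n] (h : (Finset.univ.filter fun j => w j = true).card = k) :
    oneK k n w ≤ n := by
  set S := (Finset.range n).filter fun p =>
    (Finset.univ.filter fun j : Fin n => (j : ℕ) ≤ p ∧ w j = true).card = k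
  have hlast : n - 1 ∈ S := by
    refine Finset.mem_filter.2 ⟨Finset.mem_range.2 (Nat.sub_one_lt (NeZero.ne n)), h ▸ ?_⟩
    congr 1
    exact Finset.filter_congr fun j _ => and_iff_right (Nat.le_sub_one_of_lt j.isLt)
  have hS : S.Nonempty := ⟨_, hlast⟩
  have hmin : S.min.getD n = S.min' hS := by rw [← Finset.coe_min' hS]; rfl
  rw [oneK, hmin]
  exact Finset.mem_range.1 (Finset.mem_filter.1 (S.min'_mem hS)).1

end OneK

lemma consSetB_nonempty {n : ℕ} [NeZero n] (w : Fin n → Bool) : (consSetB n w).Nonempty :=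
  ⟨(0, w 0), by simp [consSetB]⟩

lemma exists_extensions_card_lt_and_eq {n k : ℕ} {Q : Finset (Fin n × Bool)}
    {w₀ : Fin n → Bool} (hQ : Q ⊆ consSetB n w₀) (hQk : Q.card < k)
    (hkn : k + Q.card ≤ n) :
    ∃ w₁ w₂ : Fin n → Bool, Q ⊆ consSetB n w₁ ∧ Q ⊆ consSetB n w₂ ∧
      (Finset.univ.filter fun j => w₁ j = true).card < k ∧
      (Finset.univ.filter fun j => w₂ j = true).card = k := by
  classical
  set D := Q.image Prod.fst
  set s := D.filter fun i => w₀ i = true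
  set t := Finset.univ.filter fun i => i ∈ D → w₀ i = true
  have hext : ∀ u, s ⊆ u → u ⊆ t → Q ⊆ consSetB n fun i => decide (i ∈ u) := by
    rintro u hsu hut ⟨i, b⟩ hib
    have hiD : i ∈ D := Finset.mem_image_of_mem Prod.fst hib
    have hw₀ : w₀ i = b := (Finset.mem_filter.1 (hQ hib)).2
    simp only [consSetB, Finset.mem_filter, Finset.mem_univ, true_and]
    cases b
    · exact decide_eq_false fun hiu => by simpa [t, hiD, hw₀] using hut hiu
    · exact decide_eq_true (hsu (by simp [s, hiD, hw₀]))
  have hones (u : Finset (Fin n)) : (Finset.univ.filter fun j => decide (j ∈ u) = true) = u := by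
    ext; simp
  have hD : D.card ≤ Q.card := Finset.card_image_le
  have hs : s.card ≤ Q.card := (Finset.card_filter_le _ _).trans hD
  have ht : n - Q.card ≤ t.card := by
    have hDt : Dᶜ ⊆ t := fun i hi =>
      Finset.mem_filter.2 ⟨Finset.mem_univ i, fun h => absurd h (Finset.mem_compl.1 hi)⟩
    have := Finset.card_le_card hDt
    rw [Finset.card_compl, Fintype.card_fin] at this
    omega
  have hst : s ⊆ t := fun i hi => by
    obtain ⟨-, hi⟩ := Finset.mem_filter.1 hi
    exact Finset.mem_filter.2 ⟨Finset.mem_univ i, fun _ => hi⟩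
  obtain ⟨v, hsv, hvt, hv⟩ :=
    Finset.exists_subsuperset_card_eq (n := k) hst (by omega) (by omega)
  exact ⟨_, _, hext s subset_rfl hst, hext v hsv hvt, by rw [hones]; omega, by rw [hones, hv]⟩

/-- For k ≥ 1 and n ≥ k² + k, no decision tree over assignment queries of depth
k−1 computes One^k_n; hence rk(One^k_n) = k for such n. -/
theorem oneK_rank_lower_bound (k n : ℕ) (hk : 1 ≤ k) (hn : k ^ 2 + k ≤ n) [NeZero n] :
    ¬ ∃ T : DTree (Fin n × Bool) ℕ,
        T.depth ≤ k - 1 ∧ ∀ w : Fin n → Bool, T.eval (consSetB n) w = oneK k n w := by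
  rintro ⟨T, hdepth, hT⟩
  obtain ⟨Q, -, ⟨w₀, hw₀⟩, hQ, o, ho⟩ := T.exists_superset_eval_const (consSetB n)
    consSetB_nonempty ∅ (fun _ => false) (Finset.empty_subset _)
  rw [Finset.card_empty, zero_add] at hQ
  have hk2 : k ≤ k ^ 2 := Nat.le_self_pow two_ne_zero k
  obtain ⟨w₁, w₂, hw₁, hw₂, hones₁, hones₂⟩ :=
    exists_extensions_card_lt_and_eq (k := k) hw₀ (by omega) (by omega)
  have h₁ : oneK k n w₁ = n + 1 := oneK_of_card_lt hones₁
  have h₂ : oneK k n w₂ ≤ n := oneK_le_of_card_eq hones₂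
  have : oneK k n w₁ = oneK k n w₂ := by rw [← hT, ← hT, ho w₁ hw₁, ho w₂ hw₂]
  omega
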